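/- There is a universal constant C > 0 with the following property. Let d be an even positive integer, δ ≤ d/4 a positive integer, a and L positive integers with d = aL and 1 ≤ a < δ, b > 4, let m_1,…,m_{2δ−1} be the windowed Fourier masks, and let 0 < p ≤ q. Then ‖Z(x⁺) − Z(x⁻)‖₂² ≤ C·(2δ−1)^{1/2}·(δ/a)·p²·(e^{1/b} − 1)^{−2}. -/

import Mathlib

open scoped BigOperators

noncomputable section

/-- Map an integer to `Fin d` by reduction mod `d` (requires `0 < d`). -/
def intToFin (d : ℕ) (hd : 0 < d) (z : ℤ) : Fin d :=
  ⟨(z % (d : ℤ)).toNat, by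
    have h1 : 0 ≤ z % (d : ℤ) := Int.emod_nonneg z (by exact_mod_cast hd.ne')
    have h2 : z % (d : ℤ) < (d : ℤ) := Int.emod_lt_of_pos z (by exact_mod_cast hd)
    omega⟩

/-- Circular shift: `(S_ℓ x)(n) = x(((n + ℓ - 1) mod d) + 1)` in 1-based indexing. -/
def shift {d : ℕ} (ℓ : ℤ) (x : Fin d → ℂ) : Fin d → ℂ :=
  fun i => x (intToFin d i.pos ((i : ℤ) + ℓ))

/-- `⟨u,v⟩ = ∑ u(n) conj(v(n))`. -/
def innerC {d : ℕ} (u v : Fin d → ℂ) : ℂ := ∑ n, u n * (starRingEnd ℂ) (v n)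

/-- `x ∼ x'` iff `x = e^{iθ} x'` for some real `θ`. -/
def phaseEquiv {d : ℕ} (x x' : Fin d → ℂ) : Prop :=
  ∃ θ : ℝ, x = fun n => Complex.exp (θ * Complex.I) * x' n

/-- Euclidean norm on `ℂ^d`. -/
def norm2 {d : ℕ} (x : Fin d → ℂ) : ℝ := Real.sqrt (∑ n, ‖x n‖ ^ 2)

/-- `D₂(x,x') = min_θ ‖x - e^{iθ} x'‖₂`. -/
def D2 {d : ℕ} (x x' : Fin d → ℂ) : ℝ :=
  ⨅ θ : ℝ, norm2 (fun n => x n - Complex.exp (θ * Complex.I) * x' n)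

/-- `C_{p,q} = {x : p ≤ |x(n)| ≤ q for all n}`. -/
def Cpq (d : ℕ) (p q : ℝ) : Set (Fin d → ℂ) :=
  {x | ∀ n, p ≤ ‖x n‖ ∧ ‖x n‖ ≤ q}

/-- `‖m‖_∞ = max_k ‖m_k‖_∞`. -/
def maskSup {d K : ℕ} (m : Fin K → Fin d → ℂ) : ℝ :=
  ⨆ k, ⨆ n, ‖m k n‖

/-- The measurement map `Z(x)_{k,ℓ} = |⟨S_{ℓa} m_k, x⟩|`, `1 ≤ k ≤ K`, `1 ≤ ℓ ≤ L`. -/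
def Zmap {d K : ℕ} (L : ℕ) (m : Fin K → Fin d → ℂ) (a : ℕ) (x : Fin d → ℂ) :
    EuclideanSpace ℝ (Fin K × Fin L) :=
  WithLp.toLp 2 fun kl => ‖innerC (shift ((((kl.2 : ℕ) + 1) * a : ℕ) : ℤ) (m kl.1)) x‖

/-- The measurement map `Y(x)_{k,ℓ} = |⟨S_{ℓa} m_k, x⟩|²`. -/
def Ymap {d K : ℕ} (L : ℕ) (m : Fin K → Fin d → ℂ) (a : ℕ) (x : Fin d → ℂ) :
    EuclideanSpace ℝ (Fin K × Fin L) :=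
  WithLp.toLp 2 fun kl => ‖innerC (shift ((((kl.2 : ℕ) + 1) * a : ℕ) : ℤ) (m kl.1)) x‖ ^ 2

/-- The vectors `x^{±}` (sign `ε = ±1`): `q` on positions `1,…,d/2-δ`, `p` on
`d/2-δ+1,…,d/2`, `±q` on `d/2+1,…,d-δ`, and `p` on `d-δ+1,…,d`. -/
def xpm (d δ : ℕ) (p q ε : ℝ) : Fin d → ℂ :=
  fun i => if (i : ℕ) < d / 2 - δ then (q : ℂ)
    else if (i : ℕ) < d / 2 then (p : ℂ)
    else if (i : ℕ) < d - δ then ((ε * q : ℝ) : ℂ)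
    else (p : ℂ)

/-- The difference of outer products `x x^* - x' x'^*`. -/
def outerDiff {d : ℕ} (x x' : Fin d → ℂ) : Matrix (Fin d) (Fin d) ℂ :=
  Matrix.of fun i j => x i * star (x j) - x' i * star (x' j)

lemma outerDiff_isHermitian {d : ℕ} (x x' : Fin d → ℂ) :
    (outerDiff x x').IsHermitian := by
  unfold Matrix.IsHermitian
  ext i j
  simp [outerDiff, Matrix.conjTranspose_apply, star_sub, star_mul, star_star, mul_comm]

/-- `d₁(x,x') = ‖x x^* - x' x'^*‖₁`, the sum of the singular values (for a Hermitian
matrix, the sum of the absolute values of its eigenvalues). -/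
def d1 {d : ℕ} (x x' : Fin d → ℂ) : ℝ :=
  ∑ i, |(outerDiff_isHermitian x x').eigenvalues i|

/-- The windowed Fourier masks: `m_k(n) = e^{-n/b} (2δ-1)^{-1/4} e^{2πi(k-1)(n-1)/(2δ-1)}`
for `1 ≤ n ≤ δ`, and `0` for `δ < n ≤ d` (the 0-based indices `k, n` stand for `k-1, n-1`). -/
def fourierMask (d δ : ℕ) (b : ℝ) : Fin (2 * δ - 1) → Fin d → ℂ :=
  fun k n =>
    if (n : ℕ) < δ then
      ((Real.exp (-(((n : ℕ) : ℝ) + 1) / b) * ((2 * δ - 1 : ℕ) : ℝ) ^ (-(1 : ℝ) / 4) : ℝ) : ℂ) *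
        Complex.exp (2 * (Real.pi : ℂ) * Complex.I * ((k : ℕ) : ℂ) * ((n : ℕ) : ℂ) /
          ((2 * δ - 1 : ℕ) : ℂ))
    else 0

/-!
`x⁺` and `x⁻` differ only by a sign on the block `d/2 ≤ i < d - δ`. Splitting a measurement
`⟨S_{ℓa} m_k, x⁺⟩ = A + B` with `B` the part on that block, the measurement of `x⁻` is `A - B`,
so the two moduli differ by at most `2 min(|A|, |B|)`. A mask window of length `δ` meeting both
the block and its complement straddles one of the two edges of the block, and outside the block it
only sees entries equal to `p`; hence `|A| ≤ |p| ‖m_k‖₁ ≤ |p| (2δ-1)^{-1/4} / (e^{1/b} - 1)`.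
Only `O(δ/a)` of the shifts `ℓa` straddle an edge, and summing over the `2δ - 1` frequencies gives
the bound with `C = 16`.
-/

open Finset

theorem Nat.mod_eq_or_mod_add_eq_of_lt_two_mul {x d : ℕ} (h : x < 2 * d) :
    x % d = x ∨ x % d + d = x := by
  have hq : x / d < 2 := Nat.div_lt_of_lt_mul (by linarith)
  have := Nat.div_add_mod x d
  interval_cases x / d <;> omega

theorem abs_norm_add_sub_norm_sub_le {E : Type*} [SeminormedAddCommGroup E] (a b : E) :
    |‖a + b‖ - ‖a - b‖| ≤ 2 * ‖b‖ :=
  calc |‖a + b‖ - ‖a - b‖| ≤ ‖(a + b) - (a - b)‖ := abs_norm_sub_norm_le _ _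
    _ = ‖b + b‖ := by rw [add_sub_sub_cancel]
    _ ≤ 2 * ‖b‖ := (norm_add_le b b).trans_eq (two_mul _).symm

theorem EuclideanSpace.norm_sq_le_card_mul_sq {𝕜 ι : Type*} [RCLike 𝕜] [Fintype ι] [DecidableEq ι]
    (v : EuclideanSpace 𝕜 ι) (s : Finset ι) {c : ℝ}
    (h : ∀ i, ‖v i‖ ≤ if i ∈ s then c else 0) : ‖v‖ ^ 2 ≤ #s * c ^ 2 := by
  rw [EuclideanSpace.norm_sq_eq]
  calc ∑ i, ‖v i‖ ^ 2 ≤ ∑ i, (if i ∈ s then c else 0) ^ 2 :=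
        sum_le_sum fun i _ => pow_le_pow_left₀ (norm_nonneg _) (h i) 2
    _ = #s * c ^ 2 := by simp [apply_ite (· ^ 2), sum_ite_mem]

theorem card_filter_add_mul_mod_lt_le {a L : ℕ} (ha : 0 < a) (c n : ℕ) :
    #{ℓ : Fin L | (c + (ℓ + 1) * a) % (a * L) < n} ≤ n / a + 1 := by
  -- `(c + (ℓ + 1) a) % (a L) / a = (c / a + ℓ + 1) % L` determines `ℓ`
  refine (card_le_card_of_injOn (t := range (n / a + 1))
    (fun ℓ : Fin L => (c + (ℓ + 1) * a) % (a * L) / a) ?_ ?_).trans_eq (card_range _)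
  · intro ℓ hℓ
    simp only [coe_filter, mem_univ, true_and, Set.mem_ofPred_eq] at hℓ
    simpa [Nat.lt_succ_iff] using Nat.div_le_div_right (c := a) hℓ.le
  · intro ℓ₁ _ ℓ₂ _ h
    simp only [mul_comm a L, Nat.mod_mul_left_div_self, Nat.add_mul_div_right _ _ ha] at h
    have h' : (ℓ₁ : ℕ) % L = ℓ₂ % L :=
      (Nat.ModEq.add_left_cancel' (c / a) h).add_right_cancel' 1
    simpa [Nat.mod_eq_of_lt ℓ₁.isLt, Nat.mod_eq_of_lt ℓ₂.isLt, Fin.ext_iff] using h'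

theorem sum_range_exp_neg_div_le {b : ℝ} (hb : 0 < b) (N : ℕ) :
    ∑ n ∈ range N, Real.exp (-(n + 1) / b) ≤ 1 / (Real.exp (1 / b) - 1) := by
  set r := Real.exp (-(1 / b))
  have hr : r < 1 := Real.exp_lt_one_iff.mpr (by simp [hb])
  have hterm : ∀ n : ℕ, Real.exp (-(n + 1) / b) = r ^ (1 + n) := fun n => by
    rw [← Real.exp_nat_mul]; congr 1; push_cast; ring
  calc ∑ n ∈ range N, Real.exp (-(n + 1) / b) = ∑ n ∈ Ico 1 (N + 1), r ^ n := by
        rw [sum_Ico_eq_sum_range, Nat.add_sub_cancel]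
        exact sum_congr rfl fun n _ => hterm n
    _ ≤ r ^ 1 / (1 - r) := geom_sum_Ico_le_of_lt_one (Real.exp_nonneg _) hr
    _ = 1 / (Real.exp (1 / b) - 1) := by
        have : Real.exp (1 / b) - 1 ≠ 0 :=
          (sub_pos.mpr (Real.one_lt_exp_iff.mpr (by positivity))).ne'
        simp only [r, pow_one, Real.exp_neg]
        field_simp

section FourierMask

variable {d δ : ℕ} {b : ℝ}

theorem fourierMask_eq_zero (k : Fin (2 * δ - 1)) {n : Fin d} (hn : δ ≤ n) :
    fourierMask d δ b k n = 0 :=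
  if_neg (not_lt.mpr hn)

theorem norm_fourierMask_le (k : Fin (2 * δ - 1)) (n : Fin d) :
    ‖fourierMask d δ b k n‖
      ≤ Real.exp (-((n : ℕ) + 1) / b) * ((2 * δ - 1 : ℕ) : ℝ) ^ (-(1 : ℝ) / 4) := by
  unfold fourierMask
  split_ifs
  · rw [norm_mul, Complex.norm_real, Real.norm_of_nonneg (by positivity)]
    have : 2 * (Real.pi : ℂ) * Complex.I * ((k : ℕ) : ℂ) * ((n : ℕ) : ℂ) / ((2 * δ - 1 : ℕ) : ℂ)
        = ((2 * Real.pi * (k : ℕ) * (n : ℕ) / (2 * δ - 1 : ℕ) : ℝ) : ℂ) * Complex.I := by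
      push_cast; ring
    rw [this, Complex.norm_exp_ofReal_mul_I, mul_one]
  · rw [norm_zero]; positivity

theorem sum_norm_fourierMask_le (hb : 0 < b) (k : Fin (2 * δ - 1)) :
    ∑ n : Fin d, ‖fourierMask d δ b k n‖
      ≤ ((2 * δ - 1 : ℕ) : ℝ) ^ (-(1 : ℝ) / 4) / (Real.exp (1 / b) - 1) :=
  calc ∑ n : Fin d, ‖fourierMask d δ b k n‖
      ≤ ∑ n : Fin d, Real.exp (-((n : ℕ) + 1) / b) * ((2 * δ - 1 : ℕ) : ℝ) ^ (-(1 : ℝ) / 4) :=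
        sum_le_sum fun n _ => norm_fourierMask_le k n
    _ = (∑ n ∈ range d, Real.exp (-(n + 1) / b)) * ((2 * δ - 1 : ℕ) : ℝ) ^ (-(1 : ℝ) / 4) := by
        rw [sum_mul, Fin.sum_univ_eq_sum_range (fun n : ℕ => Real.exp (-(n + 1) / b) * _)]
    _ ≤ 1 / (Real.exp (1 / b) - 1) * ((2 * δ - 1 : ℕ) : ℝ) ^ (-(1 : ℝ) / 4) := by
        gcongr; exact sum_range_exp_neg_div_le hb d
    _ = _ := by ring

end FourierMask

section Shift

variable {d : ℕ} [NeZero d]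

theorem shift_natCast_apply (s : ℕ) (u : Fin d → ℂ) (i : Fin d) :
    shift (s : ℤ) u i = u (i + Fin.ofNat d s) := by
  refine congrArg u (Fin.ext ?_)
  simp only [intToFin, Fin.val_add, Fin.val_ofNat, Nat.add_mod_mod]
  rw [← Nat.cast_add, ← Int.natCast_mod, Int.toNat_natCast]

theorem sum_norm_shift_natCast (s : ℕ) (u : Fin d → ℂ) :
    ∑ i, ‖shift (s : ℤ) u i‖ = ∑ i, ‖u i‖ := by
  simp only [shift_natCast_apply]
  exact Equiv.sum_comp (Equiv.addRight (Fin.ofNat d s)) (‖u ·‖)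

theorem shift_natCast_apply_eq_zero {δ s : ℕ} {u : Fin d → ℂ}
    (hu : ∀ n : Fin d, δ ≤ (n : ℕ) → u n = 0) {i : Fin d} (hi : δ ≤ ((i : ℕ) + s) % d) :
    shift (s : ℤ) u i = 0 := by
  rw [shift_natCast_apply]
  exact hu _ (by rwa [Fin.val_add, Fin.val_ofNat, Nat.add_mod_mod])

end Shift

theorem abs_norm_innerC_sub_le_of_flip {d : ℕ} (u x y : Fin d → ℂ) (s : Finset (Fin d))
    (hy : ∀ i, y i = if i ∈ s then -x i else x i) :
    |‖innerC u x‖ - ‖innerC u y‖| ≤ 2 * ∑ i ∈ s, ‖u i‖ * ‖x i‖ ∧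
      |‖innerC u x‖ - ‖innerC u y‖| ≤ 2 * ∑ i ∈ sᶜ, ‖u i‖ * ‖x i‖ := by
  set A := ∑ i ∈ sᶜ, u i * starRingEnd ℂ (x i)
  set B := ∑ i ∈ s, u i * starRingEnd ℂ (x i)
  have hx : innerC u x = A + B := (sum_compl_add_sum s _).symm
  have hy : innerC u y = A - B := by
    rw [innerC, ← sum_compl_add_sum s, sub_eq_add_neg, ← sum_neg_distrib]
    congr 1 <;> refine sum_congr rfl fun i hi => ?_
    · rw [hy, if_neg (mem_compl.mp hi)]
    · rw [hy, if_pos hi, map_neg, mul_neg]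
  have hnorm (t : Finset (Fin d)) :
      ‖∑ i ∈ t, u i * starRingEnd ℂ (x i)‖ ≤ ∑ i ∈ t, ‖u i‖ * ‖x i‖ :=
    (norm_sum_le _ _).trans_eq (by simp only [norm_mul, Complex.norm_conj])
  rw [hx, hy]
  refine ⟨(abs_norm_add_sub_norm_sub_le A B).trans (by gcongr; exact hnorm s), ?_⟩
  rw [add_comm, ← norm_neg (A - B), neg_sub]
  exact (abs_norm_add_sub_norm_sub_le B A).trans (by gcongr; exact hnorm sᶜ)

section SignedVectors

variable {d δ : ℕ} {p q : ℝ}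

def flipBlock (d δ : ℕ) : Finset (Fin d) := {i | d / 2 ≤ (i : ℕ) ∧ (i : ℕ) < d - δ}

theorem xpm_neg_one_apply (i : Fin d) :
    xpm d δ p q (-1) i = if i ∈ flipBlock d δ then -xpm d δ p q 1 i else xpm d δ p q 1 i := by
  simp only [flipBlock, mem_filter, mem_univ, true_and, xpm]
  split_ifs <;> first | omega | (push_cast; ring)

theorem xpm_one_apply_of_notMem_flipBlock {i : Fin d} (hi : d / 2 - δ ≤ (i : ℕ))
    (hflip : i ∉ flipBlock d δ) : xpm d δ p q 1 i = p := by
  simp only [flipBlock, mem_filter, mem_univ, true_and] at hflip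
  simp only [xpm]
  split_ifs <;> first | rfl | omega

end SignedVectors

/-- The window `{i | (i + t) % d < δ}` contains both `d/2 - 1` and `d/2`, or both `d - δ - 1`
and `d - δ`. -/
def WindowMeetsFlipEdge (d δ t : ℕ) : Prop :=
  (d / 2 - 1 + t) % d < δ - 1 ∨ (d - δ - 1 + t) % d < δ - 1

instance (d δ t : ℕ) : Decidable (WindowMeetsFlipEdge d δ t) :=
  inferInstanceAs (Decidable (_ ∨ _))

theorem le_and_windowMeetsFlipEdge_of_mem_window {d δ t : ℕ} (ht : t ≤ d) {i w : Fin d}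
    (hw : w ∈ flipBlock d δ) (hi : i ∉ flipBlock d δ)
    (hwt : ((w : ℕ) + t) % d < δ) (hit : ((i : ℕ) + t) % d < δ) :
    d / 2 - δ ≤ (i : ℕ) ∧ WindowMeetsFlipEdge d δ t := by
  simp only [flipBlock, mem_filter, mem_univ, true_and] at hw hi
  unfold WindowMeetsFlipEdge
  have hd : 0 < d := i.pos
  have := Nat.mod_lt ((d / 2 - 1) + t) hd
  have := Nat.mod_lt ((d - δ - 1) + t) hd
  have := Nat.mod_eq_or_mod_add_eq_of_lt_two_mul (x := i + t) (d := d) (by omega)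
  have := Nat.mod_eq_or_mod_add_eq_of_lt_two_mul (x := w + t) (d := d) (by omega)
  have := Nat.mod_eq_or_mod_add_eq_of_lt_two_mul (x := d / 2 - 1 + t) (d := d) (by omega)
  have := Nat.mod_eq_or_mod_add_eq_of_lt_two_mul (x := d - δ - 1 + t) (d := d) (by omega)
  omega

theorem abs_norm_innerC_shift_xpm_sub_le {d δ : ℕ} [NeZero d] (p q : ℝ) {t : ℕ} (ht : t ≤ d)
    (u : Fin d → ℂ) (hu : ∀ n : Fin d, δ ≤ (n : ℕ) → u n = 0) :
    |‖innerC (shift (t : ℤ) u) (xpm d δ p q 1)‖ - ‖innerC (shift (t : ℤ) u) (xpm d δ p q (-1))‖|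
      ≤ if WindowMeetsFlipEdge d δ t then 2 * |p| * ∑ n, ‖u n‖ else 0 := by
  set v := shift (t : ℤ) u
  have hv (i : Fin d) (hvi : v i ≠ 0) : ((i : ℕ) + t) % d < δ :=
    not_le.mp fun h => hvi (shift_natCast_apply_eq_zero hu h)
  obtain ⟨hflip, hfix⟩ := abs_norm_innerC_sub_le_of_flip v (xpm d δ p q 1) (xpm d δ p q (-1))
    (flipBlock d δ) xpm_neg_one_apply
  have hRHS : 0 ≤ if WindowMeetsFlipEdge d δ t then 2 * |p| * ∑ n, ‖u n‖ else 0 := by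
    split_ifs <;> positivity
  by_cases hwindow : ∀ w ∈ flipBlock d δ, v w = 0
  · have : ∑ i ∈ flipBlock d δ, ‖v i‖ * ‖xpm d δ p q 1 i‖ = 0 :=
      sum_eq_zero fun w hw => by simp [hwindow w hw]
    exact hflip.trans (by rwa [this, mul_zero])
  push Not at hwindow
  obtain ⟨w, hw, hvw⟩ := hwindow
  have hcompl (i : Fin d) (hi : i ∈ (flipBlock d δ)ᶜ) (hvi : v i ≠ 0) :
      xpm d δ p q 1 i = p ∧ WindowMeetsFlipEdge d δ t := by
    obtain ⟨hle, hedge⟩ :=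
      le_and_windowMeetsFlipEdge_of_mem_window ht hw (mem_compl.mp hi) (hv w hvw) (hv i hvi)
    exact ⟨xpm_one_apply_of_notMem_flipBlock hle (mem_compl.mp hi), hedge⟩
  refine hfix.trans ?_
  split_ifs with hedge
  · calc 2 * ∑ i ∈ (flipBlock d δ)ᶜ, ‖v i‖ * ‖xpm d δ p q 1 i‖
        ≤ 2 * ∑ i, ‖v i‖ * |p| := by
          gcongr
          refine (sum_le_sum fun i hi => ?_).trans
            (sum_le_univ_sum_of_nonneg fun i => by positivity)
          by_cases hvi : v i = 0
          · simp [hvi]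
          · rw [(hcompl i hi hvi).1, Complex.norm_real, Real.norm_eq_abs]
      _ = 2 * |p| * ∑ n, ‖u n‖ := by rw [← sum_mul, sum_norm_shift_natCast]; ring
  · refine le_of_eq (mul_eq_zero_of_right 2 (sum_eq_zero fun i hi => ?_))
    by_cases hvi : v i = 0
    · simp [hvi]
    · exact absurd (hcompl i hi hvi).2 hedge

def edgeShifts (d δ a L : ℕ) : Finset (Fin L) := {ℓ | WindowMeetsFlipEdge d δ ((ℓ + 1) * a)}

theorem card_edgeShifts_le {d δ a L : ℕ} (hd : d = a * L) (ha : 0 < a) :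
    #(edgeShifts d δ a L) ≤ 2 * ((δ - 1) / a + 1) := by
  subst hd
  have h₁ := card_filter_add_mul_mod_lt_le (L := L) ha (a * L / 2 - 1) (δ - 1)
  have h₂ := card_filter_add_mul_mod_lt_le (L := L) ha (a * L - δ - 1) (δ - 1)
  have h := (card_union_le _ _).trans (add_le_add h₁ h₂)
  refine (card_le_card fun ℓ hℓ => ?_).trans (h.trans (by omega))
  simp only [edgeShifts, mem_union, mem_filter, mem_univ, true_and] at hℓ ⊢
  exact hℓ

theorem card_edgeShifts_le_div {d δ a L : ℕ} (hd : d = a * L) (ha : 0 < a) (haδ : a ≤ δ) :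
    (#(edgeShifts d δ a L) : ℝ) ≤ 4 * ((δ : ℝ) / a) := by
  have hδa : (1 : ℝ) ≤ δ / a := (one_le_div (by positivity)).mpr (by exact_mod_cast haδ)
  calc (#(edgeShifts d δ a L) : ℝ) ≤ 2 * (((δ - 1) / a : ℕ) + 1 : ℝ) := by
        exact_mod_cast card_edgeShifts_le hd ha
    _ ≤ 2 * ((δ : ℝ) / a + 1) := by
        gcongr
        exact Nat.cast_div_le.trans (by gcongr; exact_mod_cast Nat.sub_le δ 1)
    _ ≤ 4 * ((δ : ℝ) / a) := by linarith

theorem norm_Zmap_xpm_sub_apply_le {d δ a L : ℕ} [NeZero d] (hd : d = a * L) {b : ℝ} (hb : 0 < b)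
    (p q : ℝ) (k : Fin (2 * δ - 1)) (ℓ : Fin L) :
    ‖(Zmap L (fourierMask d δ b) a (xpm d δ p q 1)
        - Zmap L (fourierMask d δ b) a (xpm d δ p q (-1))) (k, ℓ)‖
      ≤ if ℓ ∈ edgeShifts d δ a L then
          2 * |p| * (((2 * δ - 1 : ℕ) : ℝ) ^ (-(1 : ℝ) / 4) / (Real.exp (1 / b) - 1))
        else 0 := by
  have ht : ((ℓ : ℕ) + 1) * a ≤ d := hd ▸ mul_comm a L ▸ Nat.mul_le_mul_right a ℓ.isLt
  rw [PiLp.sub_apply, Real.norm_eq_abs]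
  refine (abs_norm_innerC_shift_xpm_sub_le p q ht (fourierMask d δ b k)
    fun n => fourierMask_eq_zero k).trans ?_
  simp only [edgeShifts, mem_filter, mem_univ, true_and]
  split_ifs
  · exact mul_le_mul_of_nonneg_left (sum_norm_fourierMask_le hb k) (by positivity)
  · rfl

/-- For the windowed Fourier masks,
`‖Z(x⁺) - Z(x⁻)‖₂² ≤ C (2δ-1)^{1/2} (δ/a) p² (e^{1/b} - 1)^{-2}`. -/
theorem Z_diff_bound_fourier : ∃ C : ℝ, 0 < C ∧
    ∀ (d δ a L : ℕ) (b p q : ℝ),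
      0 < d → Even d → 0 < δ → 4 * δ ≤ d → 0 < a → 0 < L → d = a * L → 1 ≤ a → a < δ →
      4 < b → 0 < p → p ≤ q →
      ‖Zmap L (fourierMask d δ b) a (xpm d δ p q 1)
          - Zmap L (fourierMask d δ b) a (xpm d δ p q (-1))‖ ^ 2
        ≤ C * ((2 * δ - 1 : ℕ) : ℝ) ^ ((1 : ℝ) / 2) * ((δ : ℝ) / (a : ℝ)) * p ^ 2
            / (Real.exp (1 / b) - 1) ^ 2 := by
  refine ⟨16, by norm_num, ?_⟩
  intro d δ a L b p q hd _ _ _ ha _ hdaL _ haδ hb _ _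
  have : NeZero d := ⟨hd.ne'⟩
  set K : ℝ := ((2 * δ - 1 : ℕ) : ℝ)
  have hK : 0 < K := Nat.cast_pos.mpr (by omega)
  have hKrpow : K * (K ^ (-(1 : ℝ) / 4)) ^ 2 = K ^ ((1 : ℝ) / 2) := by
    rw [← Real.rpow_natCast, ← Real.rpow_mul hK.le, ← Real.rpow_one_add' hK.le (by norm_num)]
    norm_num
  calc _ ≤ #(univ ×ˢ edgeShifts d δ a L)
          * (2 * |p| * (K ^ (-(1 : ℝ) / 4) / (Real.exp (1 / b) - 1))) ^ 2 :=
        EuclideanSpace.norm_sq_le_card_mul_sq _ _ fun ⟨k, ℓ⟩ => by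
          simpa using norm_Zmap_xpm_sub_apply_le hdaL (by linarith) p q k ℓ
    _ ≤ K * (4 * ((δ : ℝ) / a))
          * (2 * |p| * (K ^ (-(1 : ℝ) / 4) / (Real.exp (1 / b) - 1))) ^ 2 := by
        rw [card_product, card_univ, Fintype.card_fin, Nat.cast_mul]
        gcongr
        exact card_edgeShifts_le_div hdaL ha haδ.le
    _ = _ := by
        rw [mul_pow, mul_pow, div_pow, sq_abs, ← hKrpow]
        ring
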